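/- Necessary condition for determinantal data: with l_k ≥ 1, Σ l_k = n ≥ 2, d_k ≥ 1, s_0 ≤ ··· ≤ s_n positive integers, if there exists a determinantal m ∈ ℤ^r (N(m) = {0,1}), then for every k ∈ {1,...,r}: d_k (s_{n−l_k+2} + ··· + s_n) − l_k < d_k (s_0 + s_1), where the sum s_{n−l_k+2}+···+s_n is empty (equal to 0) when l_k ≤ 1. -/

import Mathlib

/-- `P_k(m) = {z ∈ ℤ : m < z·d ≤ m + l}`, the integers in `(m/d, (m+l)/d]`. -/
def Pset (m : ℤ) (d l : ℕ) : Set ℤ := {z : ℤ | m < z * d ∧ z * d ≤ m + l}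

/-- The set of sums of `p` distinct entries of `s`. -/
def Sset {n : ℕ} (s : Fin (n + 1) → ℕ) (p : ℕ) : Set ℤ :=
  {t : ℤ | ∃ A : Finset (Fin (n + 1)), A.card = p ∧ t = ∑ i ∈ A, (s i : ℤ)}

/-- `q(z) = Σ_{P_k(m) < z} l_k`, where `P_k < z` means `z·d_k > m_k + l_k`. -/
def qval {r : ℕ} (l d : Fin r → ℕ) (m : Fin r → ℤ) (z : ℤ) : ℕ :=
  ∑ k ∈ Finset.univ.filter (fun k => m k + (l k : ℤ) < z * (d k : ℤ)), l k

/-- `N(m) = { p − q(z) : p ∈ [0, n+1], z ∈ Q_p }` with `Q_p = S_p \ ⋃_k P_k(m)`. -/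
def Nset {r n : ℕ} (l d : Fin r → ℕ) (s : Fin (n + 1) → ℕ) (m : Fin r → ℤ) : Set ℤ :=
  {ν : ℤ | ∃ p : ℕ, p ≤ n + 1 ∧ ∃ z : ℤ,
    (z ∈ Sset s p ∧ ∀ k, z ∉ Pset (m k) (d k) (l k)) ∧
    ν = (p : ℤ) - (qval l d m z : ℤ)}

/-!
For `z` outside every `P_j`, `qval z` is the total length of the intervals below `z`, and
`N(m) ⊆ {0, 1}` says that `p - 1 ≤ qval z ≤ p` whenever such a `z` lies in `S_p`. If `v` is
uncovered, the intervals meeting a set `W ⊆ (u, v)` all lie between `u` and `v`; since `P_j`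
holds at most `l_j` integers, `#W + l_k ≤ qval v - qval u` when `P_k` also lies between `u`
and `v`. Running this along the increasing chains of bottom sums `B t` and top sums `A t` of `t`
entries shows: if `B a` lies below `P_k` and `A b` above it, then `a + l_k ≤ b + 1`, and at the
ends of the chains `l_k ≤ b` and `a + l_k ≤ n + 1`. Hence
`d_k A(c + l_k - 1) - l_k ≤ m_k < d_k B(c + 2)` for some `c`, and monotonicity of `s` gives
`A(l_k - 1) - B 2 ≤ A(c + l_k - 1) - B(c + 2)`.
-/

open Finset

theorem notMem_Pset_of_mul_le {m z : ℤ} {d l : ℕ} (h : z * d ≤ m) : z ∉ Pset m d l :=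
  fun hz => h.not_gt hz.1

theorem notMem_Pset_of_lt_mul {m z : ℤ} {d l : ℕ} (h : m + l < z * d) : z ∉ Pset m d l :=
  fun hz => h.not_ge hz.2

theorem card_le_of_forall_mem_Pset {m : ℤ} {d l : ℕ} (hd : 1 ≤ d) {T : Finset ℤ}
    (hT : ∀ z ∈ T, z ∈ Pset m d l) : #T ≤ l := by
  have hd0 : (d : ℤ) ≠ 0 := by omega
  calc #T ≤ #(Ioc m (m + l)) :=
        card_le_card_of_injOn (· * (d : ℤ)) (fun z hz => mem_coe.2 (mem_Ioc.2 (hT z hz)))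
          fun z _ z' _ h => mul_right_cancel₀ hd0 h
    _ = l := by simp

theorem card_le_sum_of_forall_exists_mem_Pset {ι : Type*} {l d : ι → ℕ} {m : ι → ℤ}
    (hd : ∀ j, 1 ≤ d j) (E : Finset ι) {W : Finset ℤ}
    (hW : ∀ w ∈ W, ∃ j ∈ E, w ∈ Pset (m j) (d j) (l j)) : #W ≤ ∑ j ∈ E, l j := by
  classical
  calc #W ≤ #(E.biUnion fun j => W.filter (· ∈ Pset (m j) (d j) (l j))) :=
        card_le_card fun w hw => by
        obtain ⟨j, hj, hwj⟩ := hW w hw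
        exact mem_biUnion.2 ⟨j, hj, mem_filter.2 ⟨hw, hwj⟩⟩
    _ ≤ ∑ j ∈ E, #(W.filter (· ∈ Pset (m j) (d j) (l j))) := card_biUnion_le
    _ ≤ ∑ j ∈ E, l j := sum_le_sum fun j _ =>
        card_le_of_forall_mem_Pset (hd j) fun z hz => (mem_filter.1 hz).2

section Intervals

variable {r : ℕ} {l d : Fin r → ℕ} {m : Fin r → ℤ}

theorem qval_le_sum (z : ℤ) : qval l d m z ≤ ∑ j, l j :=
  sum_le_sum_of_subset (filter_subset _ _)

theorem exists_forall_lt_mul (hd : ∀ j, 1 ≤ d j) (z₀ : ℤ) :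
    ∃ v, z₀ < v ∧ ∀ j, m j + l j < v * d j := by
  have hj : ∀ j, ∀ᶠ v in Filter.atTop, m j + l j < v * d j := fun j =>
    (Filter.eventually_gt_atTop (max (m j + l j) 0)).mono fun v hv =>
      (le_max_left _ _).trans_lt <| hv.trans_le <|
        le_mul_of_one_le_right ((le_max_right _ _).trans hv.le) (by exact_mod_cast hd j)
  exact ((Filter.eventually_gt_atTop z₀).and (Filter.eventually_all.2 hj)).exists

/-- Every interval meeting `W ⊆ (u, v)` lies between `u` and `v`, hence is counted by `qval v`
but not by `qval u`. -/
theorem card_add_add_qval_le (hd : ∀ j, 1 ≤ d j) {k : Fin r} {u v : ℤ}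
    (hv : ∀ j, v ∉ Pset (m j) (d j) (l j)) (hku : u * d k ≤ m k + l k)
    (hkv : m k + l k < v * d k) {W : Finset ℤ}
    (hW : ∀ w ∈ W, u < w ∧ w < v ∧ ∃ j ≠ k, w ∈ Pset (m j) (d j) (l j)) :
    #W + l k + qval l d m u ≤ qval l d m v := by
  set below : ℤ → Finset (Fin r) := fun z => univ.filter fun j => m j + (l j : ℤ) < z * d j
  have huv : u ≤ v := le_of_mul_le_mul_right (hku.trans hkv.le) (Nat.cast_pos.2 (hd k))
  have hsub : below u ⊆ below v := fun j hj => by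
    simp only [below, mem_filter, mem_univ, true_and] at hj ⊢
    exact hj.trans_le (mul_le_mul_of_nonneg_right huv (Nat.cast_nonneg _))
  have hk : k ∈ below v \ below u := by simp [below, hkv, hku]
  have hcov : ∀ w ∈ W, ∃ j ∈ (below v \ below u).erase k, w ∈ Pset (m j) (d j) (l j) := by
    intro w hw
    obtain ⟨huw, hwv, j, hjk, hj⟩ := hW w hw
    refine ⟨j, mem_erase.2 ⟨hjk, ?_⟩, hj⟩
    have h₁ := mul_le_mul_of_nonneg_right huw.le (Nat.cast_nonneg (α := ℤ) (d j))
    have h₂ := mul_le_mul_of_nonneg_right hwv.le (Nat.cast_nonneg (α := ℤ) (d j))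
    simp only [below, mem_sdiff, mem_filter, mem_univ, true_and, not_lt]
    exact ⟨lt_of_not_ge fun h => hv j ⟨hj.1.trans_le h₂, h⟩, h₁.trans hj.2⟩
  calc #W + l k + qval l d m u
      ≤ ∑ j ∈ (below v \ below u).erase k, l j + l k + ∑ j ∈ below u, l j := by
        gcongr
        exacts [card_le_sum_of_forall_exists_mem_Pset hd _ hcov, le_rfl]
    _ = qval l d m v := by
        rw [add_comm _ (l k), add_sum_erase _ _ hk, sum_sdiff hsub]
        rfl

end Intervals

section Sums

variable {n : ℕ}

def bottomSum (s : Fin (n + 1) → ℕ) (t : ℕ) : ℤ :=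
  ∑ i ∈ univ.filter (fun i : Fin (n + 1) => (i : ℕ) < t), (s i : ℤ)

def topSum (s : Fin (n + 1) → ℕ) (t : ℕ) : ℤ := bottomSum (s ∘ Fin.rev) t

variable (s : Fin (n + 1) → ℕ)

theorem bottomSum_zero : bottomSum s 0 = 0 := by simp [bottomSum]

theorem bottomSum_succ {t : ℕ} (ht : t ≤ n) :
    bottomSum s (t + 1) = bottomSum s t + s ⟨t, by omega⟩ := by
  have : univ.filter (fun i : Fin (n + 1) => (i : ℕ) < t + 1)
      = insert ⟨t, by omega⟩ (univ.filter fun i : Fin (n + 1) => (i : ℕ) < t) := by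
    ext i
    simp only [mem_filter, mem_univ, true_and, mem_insert, Fin.ext_iff]
    omega
  rw [bottomSum, this, sum_insert (by simp), add_comm]
  rfl

theorem topSum_succ {t : ℕ} (ht : t ≤ n) :
    topSum s (t + 1) = topSum s t + s (Fin.rev ⟨t, by omega⟩) :=
  bottomSum_succ _ ht

theorem bottomSum_mem_Sset {t : ℕ} (ht : t ≤ n + 1) : bottomSum s t ∈ Sset s t :=
  ⟨_, by rw [Fin.card_filter_val_lt]; omega, rfl⟩

theorem Sset_comp_rev_subset (p : ℕ) : Sset (s ∘ Fin.rev) p ⊆ Sset s p := by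
  rintro z ⟨A, hA, rfl⟩
  exact ⟨A.map Fin.revPerm.toEmbedding, by simp [hA], by simp [sum_map]⟩

theorem topSum_mem_Sset {t : ℕ} (ht : t ≤ n + 1) : topSum s t ∈ Sset s t :=
  Sset_comp_rev_subset s t (bottomSum_mem_Sset _ ht)

variable {s}

theorem bottomSum_lt_succ (hs : ∀ i, 0 < s i) {t : ℕ} (ht : t ≤ n) :
    bottomSum s t < bottomSum s (t + 1) := by
  rw [bottomSum_succ s ht]
  have := hs ⟨t, by omega⟩
  omega

theorem topSum_lt_succ (hs : ∀ i, 0 < s i) {t : ℕ} (ht : t ≤ n) :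
    topSum s t < topSum s (t + 1) :=
  bottomSum_lt_succ (fun _ => hs _) ht

/-- Pairing the `c` entries added on each side in increasing order, `a + b + c ≤ n + 1` puts each
bottom index below its partner. -/
theorem topSum_add_bottomSum_add_le (hmono : Monotone s) {a b c : ℕ} (h : a + b + c ≤ n + 1) :
    topSum s a + bottomSum s (b + c) ≤ topSum s (a + c) + bottomSum s b := by
  induction c generalizing b with
  | zero => simp
  | succ c ih =>
    have hab := ih (show a + (b + 1) + c ≤ n + 1 by omega)
    rw [bottomSum_succ s (by omega), show b + 1 + c = b + c + 1 by omega] at hab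
    rw [← add_assoc a, topSum_succ s (show a + c ≤ n by omega), ← add_assoc b]
    have hle : (s ⟨b, by omega⟩ : ℤ) ≤ s (Fin.rev ⟨a + c, by omega⟩) :=
      Nat.cast_le.2 (hmono (by simp [Fin.le_def]; omega))
    linarith

theorem sum_filter_eq_topSum {L : ℕ} (hL : 1 ≤ L) :
    ∑ j ∈ univ.filter (fun j : Fin (n + 1) => n + 2 ≤ (j : ℕ) + L), (s j : ℤ)
      = topSum s (L - 1) := by
  rw [topSum, bottomSum]
  refine sum_nbij' Fin.rev Fin.rev ?_ ?_ (fun _ _ => Fin.rev_rev _) (fun _ _ => Fin.rev_rev _)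
    (fun _ _ => by simp)
  all_goals
    intro i
    simp
    omega

theorem bottomSum_two (hn : 1 ≤ n) : bottomSum s 2 = s ⟨0, by omega⟩ + s ⟨1, by omega⟩ := by
  rw [show 2 = 0 + 1 + 1 from rfl, bottomSum_succ s hn, bottomSum_succ s (Nat.zero_le n),
    bottomSum_zero, zero_add]

end Sums

section Chains

variable {r n : ℕ} {l d : Fin r → ℕ} {m : Fin r → ℤ} {s : Fin (n + 1) → ℕ}

theorem qval_le_and_le_qval_add_one (hN : Nset l d s m ⊆ {0, 1}) {p : ℕ} (hp : p ≤ n + 1)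
    {z : ℤ} (hz : z ∈ Sset s p) (hfree : ∀ j, z ∉ Pset (m j) (d j) (l j)) :
    qval l d m z ≤ p ∧ p ≤ qval l d m z + 1 := by
  have h := hN ⟨p, hp, z, ⟨hz, hfree⟩, rfl⟩
  simp only [Set.mem_insert_iff, Set.mem_singleton_iff] at h
  omega

/-- Going down from `f a`, collect the covered values of `f` until the first uncovered one `u`
(or `u = f 0`); each uncovered value `f t` has `qval` at least `t - 1`. -/
theorem exists_covered_finset_below (hN : Nset l d s m ⊆ {0, 1}) {f : ℕ → ℤ}
    (hf : ∀ t ≤ n + 1, f t ∈ Sset s t) (hf_lt : ∀ t ≤ n, f t < f (t + 1)) {k : Fin r} {a : ℕ}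
    (ha : a ≤ n + 1) (hlow : f a * d k ≤ m k) :
    ∃ u ≤ f a, ∃ W : Finset ℤ,
      (∀ w ∈ W, u < w ∧ w ≤ f a ∧ ∃ j ≠ k, w ∈ Pset (m j) (d j) (l j)) ∧
        a ≤ #W + qval l d m u + 1 := by
  induction a with
  | zero => exact ⟨f 0, le_rfl, ∅, by simp, by simp⟩
  | succ a ih =>
    by_cases hfree : ∀ j, f (a + 1) ∉ Pset (m j) (d j) (l j)
    · exact ⟨f (a + 1), le_rfl, ∅, by simp,
        by simpa using (qval_le_and_le_qval_add_one hN ha (hf _ ha) hfree).2⟩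
    obtain ⟨j, hj⟩ := not_forall_not.1 hfree
    have hlt := hf_lt a (by omega)
    obtain ⟨u, hua, W, hW, hq⟩ := ih (by omega)
      ((mul_le_mul_of_nonneg_right hlt.le (Nat.cast_nonneg _)).trans hlow)
    have hjk : j ≠ k := by
      rintro rfl
      exact notMem_Pset_of_mul_le hlow hj
    refine ⟨u, hua.trans hlt.le, insert (f (a + 1)) W, ?_, ?_⟩
    · simp only [mem_insert, forall_eq_or_imp]
      exact ⟨⟨hua.trans_lt hlt, le_rfl, j, hjk, hj⟩,
        fun w hw => ⟨(hW w hw).1, (hW w hw).2.1.trans hlt.le, (hW w hw).2.2⟩⟩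
    · rw [card_insert_of_notMem fun h => (hW _ h).2.1.not_gt hlt]
      omega

/-- Going up from `f b`, the covered values of `f` are added to `W` until an uncovered value of
`f` is reached, or, past `f (n + 1)`, a point above all the intervals. -/
theorem card_add_add_qval_le_of_lt_mul (hd : ∀ j, 1 ≤ d j) (hN : Nset l d s m ⊆ {0, 1})
    (hsum : ∑ j, l j = n) {f : ℕ → ℤ} (hf : ∀ t ≤ n + 1, f t ∈ Sset s t)
    (hf_lt : ∀ t ≤ n, f t < f (t + 1)) {k : Fin r} {b : ℕ} (hb : b ≤ n + 1)
    (hhigh : m k + l k < f b * d k) {u : ℤ} (hu : u * d k ≤ m k + l k) {W : Finset ℤ}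
    (hW : ∀ w ∈ W, u < w ∧ w < f b ∧ ∃ j ≠ k, w ∈ Pset (m j) (d j) (l j)) :
    #W + l k + qval l d m u ≤ b := by
  induction hbe : n + 1 - b using Nat.strong_induction_on generalizing b W with
  | _ e ih =>
    by_cases hfree : ∀ j, f b ∉ Pset (m j) (d j) (l j)
    · exact (card_add_add_qval_le hd hfree hu hhigh hW).trans
        (qval_le_and_le_qval_add_one hN hb (hf b hb) hfree).1
    obtain ⟨j, hj⟩ := not_forall_not.1 hfree
    have hjk : j ≠ k := by
      rintro rfl
      exact notMem_Pset_of_lt_mul hhigh hj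
    have hub : u < f b := lt_of_mul_lt_mul_right (hu.trans_lt hhigh) (Nat.cast_nonneg _)
    have hins : ∀ z, f b < z →
        ∀ w ∈ insert (f b) W, u < w ∧ w < z ∧ ∃ j ≠ k, w ∈ Pset (m j) (d j) (l j) := by
      intro z hz
      simp only [mem_insert, forall_eq_or_imp]
      exact ⟨⟨hub, hz, j, hjk, hj⟩,
        fun w hw => ⟨(hW w hw).1, (hW w hw).2.1.trans hz, (hW w hw).2.2⟩⟩
    have hcard : #(insert (f b) W) = #W + 1 :=
      card_insert_of_notMem fun h => (hW _ h).2.1.false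
    rcases (show b = n + 1 ∨ b < n + 1 by omega) with rfl | hbn
    · obtain ⟨v, hbv, hv⟩ := exists_forall_lt_mul (l := l) (m := m) hd (f (n + 1))
      have := card_add_add_qval_le hd (fun j => notMem_Pset_of_lt_mul (hv j)) hu (hv k)
        (hins v hbv)
      have := qval_le_sum (l := l) (d := d) (m := m) v
      omega
    · have hlt := hf_lt b (by omega)
      have := ih (n - b) (by omega) (b := b + 1) (by omega)
        (hhigh.trans_le (mul_le_mul_of_nonneg_right hlt.le (Nat.cast_nonneg _)))
        (hins _ hlt) (by omega)
      omega

theorem l_le_of_lt_mul (hd : ∀ j, 1 ≤ d j) (hN : Nset l d s m ⊆ {0, 1}) (hsum : ∑ j, l j = n)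
    {f : ℕ → ℤ} (hf : ∀ t ≤ n + 1, f t ∈ Sset s t) (hf_lt : ∀ t ≤ n, f t < f (t + 1))
    {k : Fin r} {b : ℕ} (hb : b ≤ n + 1) (hhigh : m k + l k < f b * d k) : l k ≤ b := by
  have := card_add_add_qval_le_of_lt_mul hd hN hsum hf hf_lt hb hhigh (u := (m k + l k) / d k)
    (Int.ediv_mul_le _ (by have := hd k; omega)) (W := ∅) (by simp)
  omega

theorem add_l_le_of_mul_le (hd : ∀ j, 1 ≤ d j) (hN : Nset l d s m ⊆ {0, 1})
    {f : ℕ → ℤ} (hf : ∀ t ≤ n + 1, f t ∈ Sset s t) (hf_lt : ∀ t ≤ n, f t < f (t + 1))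
    {k : Fin r} {a : ℕ} (ha : a ≤ n + 1) (hlow : f a * d k ≤ m k) :
    a + l k ≤ ∑ j, l j + 1 := by
  obtain ⟨u, hua, W, hW, hq⟩ := exists_covered_finset_below hN hf hf_lt ha hlow
  obtain ⟨v, hav, hv⟩ := exists_forall_lt_mul (l := l) (m := m) hd (f a)
  have hu : u * d k ≤ m k + l k := by
    have := mul_le_mul_of_nonneg_right hua (Nat.cast_nonneg (α := ℤ) (d k))
    have := Nat.cast_nonneg (α := ℤ) (l k)
    linarith
  have := card_add_add_qval_le hd (fun j => notMem_Pset_of_lt_mul (hv j)) hu (hv k)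
    fun w hw => ⟨(hW w hw).1, (hW w hw).2.1.trans_lt hav, (hW w hw).2.2⟩
  have := qval_le_sum (l := l) (d := d) (m := m) v
  omega

theorem add_l_le_add_one_of_mul_le_of_lt_mul (hd : ∀ j, 1 ≤ d j) (hN : Nset l d s m ⊆ {0, 1})
    (hsum : ∑ j, l j = n) {f g : ℕ → ℤ} (hf : ∀ t ≤ n + 1, f t ∈ Sset s t)
    (hf_lt : ∀ t ≤ n, f t < f (t + 1)) (hg : ∀ t ≤ n + 1, g t ∈ Sset s t)
    (hg_lt : ∀ t ≤ n, g t < g (t + 1)) {k : Fin r} {a b : ℕ} (ha : a ≤ n + 1) (hb : b ≤ n + 1)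
    (hlow : f a * d k ≤ m k) (hhigh : m k + l k < g b * d k) : a + l k ≤ b + 1 := by
  obtain ⟨u, hua, W, hW, hq⟩ := exists_covered_finset_below hN hf hf_lt ha hlow
  have hl0 := Nat.cast_nonneg (α := ℤ) (l k)
  have hfg : f a < g b := lt_of_mul_lt_mul_right (by linarith) (Nat.cast_nonneg (d k))
  have hu : u * d k ≤ m k + l k := by
    have := mul_le_mul_of_nonneg_right hua (Nat.cast_nonneg (α := ℤ) (d k))
    linarith
  have := card_add_add_qval_le_of_lt_mul hd hN hsum hg hg_lt hb hhigh hu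
    fun w hw => ⟨(hW w hw).1, (hW w hw).2.1.trans_lt hfg, (hW w hw).2.2⟩
  omega

/-- If no `c` works, induction on `c` keeps every `topSum s (c + l k - 1)` from lying above `P_k`,
and then `bottomSum s (n - l k + 2)` lies below `P_k`, which `add_l_le_of_mul_le` forbids. -/
theorem exists_topSum_mul_le_and_lt_bottomSum_mul (hd : ∀ j, 1 ≤ d j)
    (hN : Nset l d s m ⊆ {0, 1}) (hsum : ∑ j, l j = n) (hs : ∀ i, 0 < s i) {k : Fin r}
    (hk : 1 ≤ l k) (hkn : l k ≤ n) :
    ∃ c, c + l k ≤ n ∧ topSum s (c + l k - 1) * d k ≤ m k + l k ∧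
      m k < bottomSum s (c + 2) * d k := by
  have hB := fun t (ht : t ≤ n + 1) => bottomSum_mem_Sset s ht
  have hB_lt := fun t (ht : t ≤ n) => bottomSum_lt_succ hs ht
  have hA := fun t (ht : t ≤ n + 1) => topSum_mem_Sset s ht
  have hA_lt := fun t (ht : t ≤ n) => topSum_lt_succ hs ht
  by_contra! h
  have htop : ∀ c, c + l k ≤ n → topSum s (c + l k - 1) * d k ≤ m k + l k := by
    intro c
    induction c with
    | zero =>
      intro _
      by_contra! h₀
      have := l_le_of_lt_mul hd hN hsum hA hA_lt (b := l k - 1) (by omega)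
        (by simpa using h₀)
      omega
    | succ c ih =>
      intro hc
      by_contra! h₁
      have := add_l_le_add_one_of_mul_le_of_lt_mul hd hN hsum hB hB_lt hA hA_lt
        (a := c + 2) (b := c + l k) (by omega) (by omega) (h c (by omega) (ih (by omega)))
        (by simpa [show c + 1 + l k - 1 = c + l k by omega] using h₁)
      omega
  have := add_l_le_of_mul_le hd hN hB hB_lt (a := n - l k + 2) (by omega)
    (h (n - l k) (by omega) (htop _ (by omega)))
  omega

end Chains

theorem stmt18 (r n : ℕ) (hn : 2 ≤ n) (l d : Fin r → ℕ)
    (hl : ∀ k, 1 ≤ l k) (hd : ∀ k, 1 ≤ d k) (hsum : ∑ k, l k = n)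
    (s : Fin (n + 1) → ℕ) (hs : ∀ i, 0 < s i) (hmono : Monotone s)
    (hex : ∃ m : Fin r → ℤ, Nset l d s m = {0, 1}) (k : Fin r) :
    (d k : ℤ) *
        (∑ j ∈ Finset.univ.filter (fun j : Fin (n + 1) => n + 2 ≤ (j : ℕ) + l k), (s j : ℤ))
        - (l k : ℤ)
      < (d k : ℤ) * ((s ⟨0, by omega⟩ : ℤ) + (s ⟨1, by omega⟩ : ℤ)) := by
  obtain ⟨m, hm⟩ := hex
  have hk := hl k
  have hkn : l k ≤ n := by
    rw [← hsum]
    exact single_le_sum (fun j _ => Nat.zero_le (l j)) (mem_univ k)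
  obtain ⟨c, hc, htop, hbot⟩ :=
    exists_topSum_mul_le_and_lt_bottomSum_mul hd hm.subset hsum hs hk hkn
  have hshift := topSum_add_bottomSum_add_le hmono (a := l k - 1) (b := 2) (c := c) (by omega)
  rw [show l k - 1 + c = c + l k - 1 by omega, add_comm 2 c] at hshift
  rw [sum_filter_eq_topSum hk, ← bottomSum_two (by omega)]
  have := mul_le_mul_of_nonneg_left hshift (Nat.cast_nonneg (α := ℤ) (d k))
  linarith
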